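/- arXiv:1410.7297 — 2 statements merged into one kernel-verified Lean document; each statement's English description precedes it below -/
import Mathlib

section
/- Robust constraint satisfaction via duality (necessity): let P = {r ∈ ℝ^N : S r ≤ h} be nonempty, with S ∈ ℝ^{q×N}, h ∈ ℝ^q. Let Σ ∈ ℝ^{m×p}, M ∈ ℝ^{p×N}, v ∈ ℝ^p, σ ∈ ℝ^m. If Σ(M r + v) ≤ σ for all r ∈ P, then there exists Z ∈ ℝ^{q×m} with Z ≥ 0, Zᵀ S = Σ M, and Σ v + Zᵀ h ≤ σ. -/
/-!
For each row `i`, the linear functional `r ↦ ((Σ M) r)_i` is bounded above by `σ_i - (Σ v)_i`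
on the nonempty polyhedron `{r | S r ≤ h}`, so LP duality yields `z_i ≥ 0` with
`z_iᵀ S = (Σ M)_i` and `hᵀ z_i ≤ σ_i - (Σ v)_i`; these vectors are the columns of `Z`.
LP duality is Farkas' lemma for the homogenized system, and Farkas' lemma is hyperplane
separation from a finitely generated cone, which is closed because, by Carathéodory's
reduction, it is a finite union of cones over linearly independent vectors.
-/

open Matrix Set

section Cone

variable {𝕜 ι : Type*} [Field 𝕜] [LinearOrder 𝕜] [IsStrictOrderedRing 𝕜] [Fintype ι]

theorem exists_sub_smul_nonneg_apply_eq_zero {w c : ι → 𝕜} (hw : 0 ≤ w) (hc : ∃ i, 0 < c i) :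
    ∃ (t : 𝕜) (j : ι), 0 ≤ w - t • c ∧ (w - t • c) j = 0 := by
  classical
  -- ratio test: `j` is the first coordinate of `w - t • c` to reach zero as `t` grows
  obtain ⟨j, hj, hmin⟩ := Finset.exists_min_image {i | 0 < c i} (fun i => w i / c i)
    (by simpa [Finset.Nonempty] using hc)
  rw [Finset.mem_filter_univ] at hj
  refine ⟨w j / c j, j, fun i => ?_, by simp [div_mul_cancel₀ _ hj.ne']⟩
  have hwc : w j / c j * c i ≤ w i := by
    rcases le_or_gt (c i) 0 with hci | hci
    · exact (mul_nonpos_of_nonneg_of_nonpos (div_nonneg (hw j) hj.le) hci).trans (hw i)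
    · exact (le_div_iff₀ hci).mp (hmin i (by simpa using hci))
  simpa using hwc

theorem exists_nonneg_apply_eq_zero_linearCombination_eq_of_not_linearIndependent
    {E : Type*} [AddCommGroup E] [Module 𝕜 E] {a : ι → E} (ha : ¬LinearIndependent 𝕜 a)
    {w : ι → 𝕜} (hw : 0 ≤ w) :
    ∃ (w' : ι → 𝕜) (j : ι), 0 ≤ w' ∧ w' j = 0 ∧
      Fintype.linearCombination 𝕜 a w' = Fintype.linearCombination 𝕜 a w := by
  obtain ⟨g, hg, i, hgi⟩ := Fintype.not_linearIndependent_iff.mp ha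
  obtain ⟨c, hc, hcpos⟩ : ∃ c : ι → 𝕜, Fintype.linearCombination 𝕜 a c = 0 ∧ ∃ i, 0 < c i := by
    rcases hgi.lt_or_gt with hneg | hpos
    · exact ⟨-g, by simp [Fintype.linearCombination_apply, hg], i, by simpa using hneg⟩
    · exact ⟨g, by simp [Fintype.linearCombination_apply, hg], i, hpos⟩
  obtain ⟨t, j, hnonneg, hj⟩ := exists_sub_smul_nonneg_apply_eq_zero hw hcpos
  exact ⟨w - t • c, j, hnonneg, hj, by simp [hc]⟩

end Cone

theorem image_linearCombination_subtype_ne {R ι E : Type*} [Semiring R] [PartialOrder R]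
    [Fintype ι] [DecidableEq ι] [AddCommMonoid E] [Module R E] (a : ι → E) (j : ι) :
    Fintype.linearCombination R (fun i : {i // i ≠ j} => a i) '' Ici 0 =
      Fintype.linearCombination R a '' {w | 0 ≤ w ∧ w j = 0} := by
  ext x
  simp only [mem_image, mem_Ici, mem_ofPred_eq, Fintype.linearCombination_apply]
  constructor
  · rintro ⟨u, hu, rfl⟩
    refine ⟨fun i => if h : i = j then 0 else u ⟨i, h⟩, ⟨fun i => ?_, by simp⟩, ?_⟩
    · by_cases h : i = j
      · simp [h]
      · simpa [h] using hu ⟨i, h⟩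
    · rw [Fintype.sum_eq_add_sum_subtype_ne _ j]
      simp only [dif_pos, zero_smul, zero_add]
      exact Finset.sum_congr rfl fun i _ => by rw [dif_neg i.2]
  · rintro ⟨w, ⟨hw, hwj⟩, rfl⟩
    refine ⟨fun i => w i, fun i => hw i, ?_⟩
    rw [Fintype.sum_eq_add_sum_subtype_ne _ j, hwj, zero_smul, zero_add]

theorem isClosed_image_linearCombination_Ici {ι E : Type*} [Fintype ι] [AddCommGroup E]
    [Module ℝ E] [TopologicalSpace E] [IsTopologicalAddGroup E] [ContinuousSMul ℝ E] [T2Space E]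
    (a : ι → E) : IsClosed (Fintype.linearCombination ℝ a '' Ici 0) := by
  classical
  induction h : Fintype.card ι using Nat.strong_induction_on generalizing ι with
  | _ n ih =>
  by_cases ha : LinearIndependent ℝ a
  · have hinj := linearIndependent_iff_injective_fintypeLinearCombination.mp ha
    exact (LinearMap.isClosedEmbedding_of_injective (LinearMap.ker_eq_bot.mpr hinj)).isClosedMap
      _ isClosed_Ici
  · have hunion : Fintype.linearCombination ℝ a '' Ici 0 =
        ⋃ j : ι, Fintype.linearCombination ℝ (fun i : {i // i ≠ j} => a i) '' Ici 0 := by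
      simp_rw [image_linearCombination_subtype_ne]
      refine subset_antisymm ?_ (iUnion_subset fun j => image_mono fun w hw => hw.1)
      rintro _ ⟨w, hw, rfl⟩
      obtain ⟨w', j, hw', hw'j, heq⟩ :=
        exists_nonneg_apply_eq_zero_linearCombination_eq_of_not_linearIndependent ha hw
      exact mem_iUnion.mpr ⟨j, w', ⟨hw', hw'j⟩, heq⟩
    rw [hunion]
    exact isClosed_iUnion_of_finite fun j =>
      ih _ (h ▸ Fintype.card_subtype_lt (p := (· ≠ j)) (not_not.mpr rfl)) _ rfl

theorem LinearMap.apply_eq_dotProduct_single {R κ : Type*} [CommSemiring R] [Fintype κ]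
    [DecidableEq κ] (f : (κ → R) →ₗ[R] R) (x : κ → R) :
    f x = x ⬝ᵥ fun j => f (Pi.single j 1) := by
  conv_lhs => rw [← Finset.univ_sum_single x]
  simp only [map_sum, dotProduct]
  refine Finset.sum_congr rfl fun j _ => ?_
  rw [← smul_eq_mul, ← map_smul, ← Pi.single_smul, smul_eq_mul, mul_one]

theorem Matrix.exists_nonneg_vecMul_eq_of_forall_nonneg_mulVec {ι κ : Type*} [Fintype ι]
    [Fintype κ] (A : Matrix ι κ ℝ) (b : κ → ℝ) (hb : ∀ y, 0 ≤ A *ᵥ y → 0 ≤ b ⬝ᵥ y) :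
    ∃ w, 0 ≤ w ∧ w ᵥ* A = b := by
  classical
  have hcone : ∀ w, w ᵥ* A = Fintype.linearCombination ℝ A.row w := fun w => by
    rw [vecMul_eq_sum, Fintype.linearCombination_apply]; rfl
  let C : ProperCone ℝ (κ → ℝ) :=
    ⟨(PointedCone.positive ℝ (ι → ℝ)).map (Fintype.linearCombination ℝ A.row),
      isClosed_image_linearCombination_Ici A.row⟩
  by_contra! hA
  obtain ⟨f, hfC, hfb⟩ := C.hyperplane_separation_point (x₀ := b) fun ⟨w, hw, hwb⟩ =>
    hA w hw ((hcone w).trans hwb)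
  set y : κ → ℝ := fun j => f (Pi.single j 1)
  have hf : ∀ x, f x = x ⬝ᵥ y := (f : (κ → ℝ) →ₗ[ℝ] ℝ).apply_eq_dotProduct_single
  have hAy : 0 ≤ A *ᵥ y := fun i => by
    rw [Pi.zero_apply, mulVec, ← hf]
    exact hfC _ ⟨Pi.single i 1, by simp, by simp; rfl⟩
  exact (hb y hAy).not_gt (hf b ▸ hfb)

theorem Matrix.dotProduct_le_mul_of_mulVec_le_smul {𝕜 ι κ : Type*} [Field 𝕜] [LinearOrder 𝕜]
    [IsStrictOrderedRing 𝕜] [Fintype κ] {S : Matrix ι κ 𝕜} {h : ι → 𝕜} {c : κ → 𝕜} {d : 𝕜}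
    (hne : ∃ r, S *ᵥ r ≤ h) (hub : ∀ r, S *ᵥ r ≤ h → c ⬝ᵥ r ≤ d) {ρ : κ → 𝕜} {τ : 𝕜}
    (hτ : 0 ≤ τ) (hρ : S *ᵥ ρ ≤ τ • h) : c ⬝ᵥ ρ ≤ τ * d := by
  rcases hτ.eq_or_lt with rfl | hτ
  · -- `ρ` is a recession direction of the feasible set, along which `c` cannot increase
    rw [zero_smul] at hρ
    obtain ⟨r₀, hr₀⟩ := hne
    have hray : ∀ t : 𝕜, 0 ≤ t → c ⬝ᵥ r₀ + t * c ⬝ᵥ ρ ≤ d := fun t ht => by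
      have hfeas : S *ᵥ (r₀ + t • ρ) ≤ h := by
        rw [mulVec_add, mulVec_smul]
        simpa using add_le_add hr₀ (smul_le_smul_of_nonneg_left hρ ht)
      simpa [dotProduct_add, dotProduct_smul] using hub _ hfeas
    by_contra! hpos
    rw [zero_mul] at hpos
    have hd := hub r₀ hr₀
    have := hray ((d - c ⬝ᵥ r₀ + 1) / c ⬝ᵥ ρ) (div_nonneg (by linarith) hpos.le)
    rw [div_mul_cancel₀ _ hpos.ne'] at this
    linarith
  · have hfeas : S *ᵥ (τ⁻¹ • ρ) ≤ h := by
      simpa [mulVec_smul, inv_smul_smul₀ hτ.ne'] using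
        smul_le_smul_of_nonneg_left hρ (inv_nonneg.mpr hτ.le)
    have := hub _ hfeas
    rwa [dotProduct_smul, smul_eq_mul, inv_mul_le_iff₀ hτ] at this

theorem Matrix.exists_nonneg_vecMul_eq_dotProduct_le {ι κ : Type*} [Fintype ι] [Fintype κ]
    (S : Matrix ι κ ℝ) (h : ι → ℝ) (hne : ∃ r, S *ᵥ r ≤ h) (c : κ → ℝ) (d : ℝ)
    (hub : ∀ r, S *ᵥ r ≤ h → c ⬝ᵥ r ≤ d) :
    ∃ z, 0 ≤ z ∧ z ᵥ* S = c ∧ h ⬝ᵥ z ≤ d := by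
  -- Farkas for the homogenized system: rows `(-S i, h i)` and `(0, 1)`, target `(-c, d)`
  let A : Matrix (ι ⊕ Unit) (κ ⊕ Unit) ℝ := fromBlocks (-S) (replicateCol Unit h) 0 1
  obtain ⟨w, hw, hwA⟩ := A.exists_nonneg_vecMul_eq_of_forall_nonneg_mulVec
    (Sum.elim (-c) fun _ => d) fun y hy => by
      have hρ : S *ᵥ (y ∘ Sum.inl) ≤ y (Sum.inr ()) • h := fun i => by
        simpa [A, mulVec, dotProduct, mul_comm] using hy (Sum.inl i)
      have hτ : 0 ≤ y (Sum.inr ()) := by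
        simpa [A, fromBlocks_mulVec] using hy (Sum.inr ())
      have := dotProduct_le_mul_of_mulVec_le_smul hne hub hτ hρ
      simp only [dotProduct, Fintype.sum_sum_type, Function.comp_apply] at this ⊢
      simp [Finset.sum_neg_distrib]
      linarith
  refine ⟨w ∘ Sum.inl, fun i => hw _, funext fun j => ?_, ?_⟩
  · simpa [A, vecMul_fromBlocks, vecMul_neg] using congrFun hwA (Sum.inl j)
  · have hd := congrFun hwA (Sum.inr ())
    simp [A, vecMul, dotProduct] at hd
    rw [dotProduct_comm]
    simp only [dotProduct, Function.comp_apply]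
    linarith [show 0 ≤ w (Sum.inr ()) from hw _]

theorem robust_constraint_duality_necessity
    (N q m p : ℕ)
    (S : Matrix (Fin q) (Fin N) ℝ) (h : Fin q → ℝ)
    (hne : ∃ r : Fin N → ℝ, S.mulVec r ≤ h)
    (Sig : Matrix (Fin m) (Fin p) ℝ)
    (M : Matrix (Fin p) (Fin N) ℝ) (v : Fin p → ℝ) (sig : Fin m → ℝ)
    (hfeas : ∀ r : Fin N → ℝ, S.mulVec r ≤ h → Sig.mulVec (M.mulVec r + v) ≤ sig) :
    ∃ Z : Matrix (Fin q) (Fin m) ℝ,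
      (∀ i j, 0 ≤ Z i j) ∧ Zᵀ * S = Sig * M ∧
      Sig.mulVec v + Zᵀ.mulVec h ≤ sig := by
  have hrow : ∀ i, ∃ z : Fin q → ℝ,
      0 ≤ z ∧ z ᵥ* S = (Sig * M) i ∧ h ⬝ᵥ z ≤ sig i - (Sig *ᵥ v) i := fun i =>
    S.exists_nonneg_vecMul_eq_dotProduct_le h hne _ _ fun r hr => by
      have hi := hfeas r hr i
      rw [mulVec_add, mulVec_mulVec, Pi.add_apply] at hi
      exact le_sub_iff_add_le.mpr hi
  choose z hz0 hzS hzh using hrow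
  refine ⟨(of z)ᵀ, fun k i => hz0 i k, ?_, fun i => ?_⟩
  · ext i j
    exact congrFun (hzS i) j
  · have hzi : ((of z)ᵀᵀ *ᵥ h) i = h ⬝ᵥ z i := dotProduct_comm _ _
    simp only [Pi.add_apply, hzi]
    linarith [hzh i]
end

section
/- Scaling lemma for reference sets: let Σ ∈ ℝ^{m×p}, σ ∈ ℝ^m, Γ ∈ ℝ^{N×p}, P ⊆ ℝ^N, Λ ∈ ℝ^{N×N} a diagonal invertible matrix, λ ∈ ℝ^N, and LT a subspace of ℝ^{p×N} closed under right-multiplication by diagonal matrices. Define A = {(M,v) : ∀ r ∈ P, Σ(Mr+v) ≤ σ, Γ v = λ, Γ M = Λ, M ∈ LT} and B = {(M,v) : ∀ r ∈ Λ·P + λ, Σ(Mr+v) ≤ σ, Γ v = 0, Γ M = I_N, M ∈ LT}. Then A = ∅ if and only if B = ∅. -/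
open Matrix

theorem scaling_lemma
    (m N p : ℕ)
    (Sig : Matrix (Fin m) (Fin p) ℝ) (sig : Fin m → ℝ)
    (Gam : Matrix (Fin N) (Fin p) ℝ)
    (P : Set (Fin N → ℝ))
    (Lam : Matrix (Fin N) (Fin N) ℝ) (hdiag : Lam.IsDiag) (hinv : IsUnit Lam.det)
    (lam : Fin N → ℝ)
    (LT : Set (Matrix (Fin p) (Fin N) ℝ))
    (hLT : ∀ M ∈ LT, ∀ D : Matrix (Fin N) (Fin N) ℝ, D.IsDiag → M * D ∈ LT)
    (A : Set (Matrix (Fin p) (Fin N) ℝ × (Fin p → ℝ)))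
    (hA : A = {Mv | (∀ r ∈ P, Sig.mulVec (Mv.1.mulVec r + Mv.2) ≤ sig) ∧
      Gam.mulVec Mv.2 = lam ∧ Gam * Mv.1 = Lam ∧ Mv.1 ∈ LT})
    (B : Set (Matrix (Fin p) (Fin N) ℝ × (Fin p → ℝ)))
    (hB : B = {Mv : Matrix (Fin p) (Fin N) ℝ × (Fin p → ℝ) | (∀ r ∈ (fun s => Lam.mulVec s + lam) '' P,
        Sig.mulVec (Mv.1.mulVec r + Mv.2) ≤ sig) ∧
      Gam.mulVec Mv.2 = 0 ∧ Gam * Mv.1 = 1 ∧ Mv.1 ∈ LT}) :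
    A = ∅ ↔ B = ∅ := by
  -- the diagonal inverse of Lam
  have hLamEq : Matrix.diagonal (fun i => Lam i i) = Lam := hdiag.diagonal_diag
  have hdet : Lam.det ≠ 0 := hinv.ne_zero
  have hdnz : ∀ i, Lam i i ≠ 0 := by
    intro i hi
    apply hdet
    rw [← hLamEq, Matrix.det_diagonal]
    exact Finset.prod_eq_zero (Finset.mem_univ i) hi
  set D : Matrix (Fin N) (Fin N) ℝ := Matrix.diagonal (fun i => (Lam i i)⁻¹) with hD
  have hDdiag : D.IsDiag := Matrix.isDiag_diagonal _
  have hLD : Lam * D = 1 := by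
    rw [← hLamEq, hD, Matrix.diagonal_mul_diagonal]
    rw [show (fun i => Lam i i * (Lam i i)⁻¹) = fun _ => (1:ℝ) from
      funext fun i => mul_inv_cancel₀ (hdnz i)]
    exact Matrix.diagonal_one
  have hDL : D * Lam = 1 := by
    rw [← hLamEq, hD, Matrix.diagonal_mul_diagonal]
    rw [show (fun i => (Lam i i)⁻¹ * Lam i i) = fun _ => (1:ℝ) from
      funext fun i => inv_mul_cancel₀ (hdnz i)]
    exact Matrix.diagonal_one
  rw [← Set.not_nonempty_iff_eq_empty, ← Set.not_nonempty_iff_eq_empty]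
  apply not_congr
  constructor
  · rintro ⟨⟨M, v⟩, hMv⟩
    rw [hA] at hMv
    obtain ⟨h1, h2, h3, h4⟩ := hMv
    refine ⟨⟨M * D, v - (M * D).mulVec lam⟩, ?_⟩
    rw [hB]
    refine ⟨?_, ?_, ?_, hLT M h4 D hDdiag⟩
    · rintro r ⟨s, hs, rfl⟩
      have key : (M * D).mulVec (Lam.mulVec s + lam) + (v - (M * D).mulVec lam)
          = M.mulVec s + v := by
        rw [Matrix.mulVec_add]
        have : (M * D).mulVec (Lam.mulVec s) = M.mulVec s := by
          rw [Matrix.mulVec_mulVec, Matrix.mul_assoc, hDL, Matrix.mul_one]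
        rw [this]; abel
      simp only [key]
      exact h1 s hs
    · have : Gam.mulVec ((M * D).mulVec lam) = lam := by
        rw [Matrix.mulVec_mulVec, ← Matrix.mul_assoc, h3, hLD, Matrix.one_mulVec]
      rw [Matrix.mulVec_sub, h2, this, sub_self]
    · rw [← Matrix.mul_assoc, h3, hLD]
  · rintro ⟨⟨M, v⟩, hMv⟩
    rw [hB] at hMv
    obtain ⟨h1, h2, h3, h4⟩ := hMv
    refine ⟨⟨M * Lam, v + M.mulVec lam⟩, ?_⟩
    rw [hA]
    refine ⟨?_, ?_, ?_, hLT M h4 Lam hdiag⟩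
    · intro s hs
      have key : (M * Lam).mulVec s + (v + M.mulVec lam)
          = M.mulVec (Lam.mulVec s + lam) + v := by
        rw [Matrix.mulVec_add, Matrix.mulVec_mulVec]; abel
      simp only [key]
      exact h1 _ ⟨s, hs, rfl⟩
    · rw [Matrix.mulVec_add, h2, Matrix.mulVec_mulVec, h3, Matrix.one_mulVec, zero_add]
    · rw [← Matrix.mul_assoc, h3, Matrix.one_mul]
end
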